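/- Let C ⊂ ℝ²₊ be the cone generated by two vectors l₁, l₂ ∈ ℝ²₊ with det(l₁, l₂) = ±1, and let Δ(α) = {λ ∈ ℝ²₊ : λ₁ + λ₂ ≤ α}. Then the Lebesgue measure of Δ(α) ∩ C equals α²/(2‖l₁‖₁‖l₂‖₁), where ‖l‖₁ is the sum of the coordinates of l. -/

import Mathlib

open MeasureTheory Set

/-!
Normalize the generators to `uᵢ = lᵢ / ‖lᵢ‖₁`, which does not change the cone. The linear map
`p ↦ p₀ u₁ + p₁ u₂` preserves the coordinate sum, so it maps `Δ(α)` onto `Δ(α) ∩ C`, and it scales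
area by `|det(u₁, u₂)| = 1 / (‖l₁‖₁‖l₂‖₁)`. Finally `Δ(α)` has area `α² / 2` by Fubini.
-/

def triangle (α : ℝ) : Set (Fin 2 → ℝ) := {v | 0 ≤ v 0 ∧ 0 ≤ v 1 ∧ v 0 + v 1 ≤ α}

def cone (l₁ l₂ : Fin 2 → ℝ) : Set (Fin 2 → ℝ) :=
  {v | ∃ a b : ℝ, 0 ≤ a ∧ 0 ≤ b ∧ v = a • l₁ + b • l₂}

lemma volume_slice_triangle_prod (α x : ℝ) :
    volume (Prod.mk x ⁻¹' {q : ℝ × ℝ | 0 ≤ q.1 ∧ 0 ≤ q.2 ∧ q.1 + q.2 ≤ α}) =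
      (Icc 0 α).indicator (fun x => ENNReal.ofReal (α - x)) x := by
  by_cases hx : 0 ≤ x
  · have hslice : Prod.mk x ⁻¹' {q : ℝ × ℝ | 0 ≤ q.1 ∧ 0 ≤ q.2 ∧ q.1 + q.2 ≤ α} =
        Icc 0 (α - x) := by
      ext y
      simp only [mem_preimage, mem_Icc]
      constructor
      · rintro ⟨-, hy, hxy⟩
        exact ⟨hy, by linarith⟩
      · rintro ⟨hy, hyx⟩
        exact ⟨hx, hy, by linarith⟩
    rw [hslice, Real.volume_Icc, sub_zero]
    by_cases hxα : x ≤ α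
    · rw [indicator_of_mem (show x ∈ Icc 0 α from ⟨hx, hxα⟩)]
    · rw [indicator_of_notMem (fun h : x ∈ Icc 0 α => hxα h.2),
        ENNReal.ofReal_of_nonpos (by linarith)]
  · have hslice : Prod.mk x ⁻¹' {q : ℝ × ℝ | 0 ≤ q.1 ∧ 0 ≤ q.2 ∧ q.1 + q.2 ≤ α} = ∅ := by
      ext y
      simp [hx]
    rw [hslice, measure_empty, indicator_of_notMem (fun h : x ∈ Icc 0 α => hx h.1)]

lemma volume_triangle_prod {α : ℝ} (hα : 0 ≤ α) :
    volume {q : ℝ × ℝ | 0 ≤ q.1 ∧ 0 ≤ q.2 ∧ q.1 + q.2 ≤ α} = ENNReal.ofReal (α ^ 2 / 2) := by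
  have hmeas : MeasurableSet {q : ℝ × ℝ | 0 ≤ q.1 ∧ 0 ≤ q.2 ∧ q.1 + q.2 ≤ α} :=
    (measurableSet_le measurable_const measurable_fst).inter
      ((measurableSet_le measurable_const measurable_snd).inter
        (measurableSet_le (measurable_fst.add measurable_snd) measurable_const))
  rw [Measure.volume_eq_prod, Measure.prod_apply hmeas, funext (volume_slice_triangle_prod α),
    lintegral_indicator measurableSet_Icc, ← ofReal_integral_eq_lintegral_ofReal,
    integral_Icc_eq_integral_Ioc, ← intervalIntegral.integral_of_le hα,
    intervalIntegral.integral_comp_sub_left (fun x => x), sub_self, sub_zero, integral_id]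
  · norm_num
  · exact (continuous_const.sub continuous_id).integrableOn_Icc
  · filter_upwards [ae_restrict_mem measurableSet_Icc] with x hx
    exact sub_nonneg.2 hx.2

lemma volume_triangle {α : ℝ} (hα : 0 ≤ α) : volume (triangle α) = ENNReal.ofReal (α ^ 2 / 2) := by
  rw [← volume_triangle_prod hα, ← (volume_preserving_finTwoArrow ℝ).measure_preimage_equiv]
  rfl

lemma volume_image_columns (u₁ u₂ : Fin 2 → ℝ) (s : Set (Fin 2 → ℝ)) :
    volume ((fun p => p 0 • u₁ + p 1 • u₂) '' s) =
      ENNReal.ofReal |u₁ 0 * u₂ 1 - u₁ 1 * u₂ 0| * volume s := by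
  have h : (fun p : Fin 2 → ℝ => p 0 • u₁ + p 1 • u₂) =
      Matrix.toLin' (Matrix.of ![u₁, u₂]).transpose := by
    ext p : 1
    rw [Matrix.toLin'_apply, Matrix.mulVec_transpose, Matrix.vecMul_eq_sum, Fin.sum_univ_two]
    rfl
  rw [h, Measure.addHaar_image_linearMap, LinearMap.det_toLin', Matrix.det_transpose,
    Matrix.det_fin_two]
  rfl

lemma cone_smul {l₁ l₂ : Fin 2 → ℝ} {c₁ c₂ : ℝ} (hc₁ : 0 < c₁) (hc₂ : 0 < c₂) :
    cone (c₁ • l₁) (c₂ • l₂) = cone l₁ l₂ := by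
  ext v
  constructor
  · rintro ⟨a, b, ha, hb, rfl⟩
    exact ⟨a * c₁, b * c₂, by positivity, by positivity, by simp only [mul_smul]⟩
  · rintro ⟨a, b, ha, hb, rfl⟩
    refine ⟨a / c₁, b / c₂, by positivity, by positivity, ?_⟩
    simp only [smul_smul, div_mul_cancel₀ _ hc₁.ne', div_mul_cancel₀ _ hc₂.ne']

lemma image_triangle_eq_triangle_inter_cone {u₁ u₂ : Fin 2 → ℝ} (hu₁ : 0 ≤ u₁) (hu₂ : 0 ≤ u₂)
    (hsum₁ : u₁ 0 + u₁ 1 = 1) (hsum₂ : u₂ 0 + u₂ 1 = 1) (α : ℝ) :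
    (fun p => p 0 • u₁ + p 1 • u₂) '' triangle α = triangle α ∩ cone u₁ u₂ := by
  have hsum : ∀ a b : ℝ, (a • u₁ + b • u₂) 0 + (a • u₁ + b • u₂) 1 = a + b := by
    intro a b
    simp only [Pi.add_apply, Pi.smul_apply, smul_eq_mul]
    linear_combination a * hsum₁ + b * hsum₂
  ext v
  constructor
  · rintro ⟨p, ⟨hp₀, hp₁, hp⟩, rfl⟩
    refine ⟨⟨?_, ?_, by rwa [hsum]⟩, p 0, p 1, hp₀, hp₁, rfl⟩ <;>
      exact add_nonneg (smul_nonneg hp₀ (hu₁ _)) (smul_nonneg hp₁ (hu₂ _))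
  · rintro ⟨⟨-, -, hv⟩, a, b, ha, hb, rfl⟩
    exact ⟨![a, b], ⟨ha, hb, by rwa [hsum] at hv⟩, rfl⟩

lemma volume_triangle_inter_cone {u₁ u₂ : Fin 2 → ℝ} (hu₁ : 0 ≤ u₁) (hu₂ : 0 ≤ u₂)
    (hsum₁ : u₁ 0 + u₁ 1 = 1) (hsum₂ : u₂ 0 + u₂ 1 = 1) {α : ℝ} (hα : 0 ≤ α) :
    volume (triangle α ∩ cone u₁ u₂) =
      ENNReal.ofReal (|u₁ 0 * u₂ 1 - u₁ 1 * u₂ 0| * (α ^ 2 / 2)) := by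
  rw [← image_triangle_eq_triangle_inter_cone hu₁ hu₂ hsum₁ hsum₂, volume_image_columns,
    volume_triangle hα, ENNReal.ofReal_mul (abs_nonneg _)]

/-- If `C` is the cone generated by nonnegative vectors `l₁, l₂` with
`det(l₁,l₂) = ±1`, then the Lebesgue measure of
`{λ ∈ ℝ²₊ : λ₁ + λ₂ ≤ α} ∩ C` equals `α² / (2‖l₁‖₁‖l₂‖₁)`. -/
theorem measure_triangle_inter_cone
    (l₁ l₂ : Fin 2 → ℝ)
    (h₁ : 0 ≤ l₁ 0) (h₂ : 0 ≤ l₁ 1) (h₃ : 0 ≤ l₂ 0) (h₄ : 0 ≤ l₂ 1)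
    (hdet : l₁ 0 * l₂ 1 - l₁ 1 * l₂ 0 = 1 ∨ l₁ 0 * l₂ 1 - l₁ 1 * l₂ 0 = -1)
    (α : ℝ) (hα : 0 ≤ α) :
    volume ({v : Fin 2 → ℝ | 0 ≤ v 0 ∧ 0 ≤ v 1 ∧ v 0 + v 1 ≤ α} ∩
        {v | ∃ a b : ℝ, 0 ≤ a ∧ 0 ≤ b ∧ v = a • l₁ + b • l₂}) =
      ENNReal.ofReal (α ^ 2 / (2 * (l₁ 0 + l₁ 1) * (l₂ 0 + l₂ 1))) := by
  have habs : |l₁ 0 * l₂ 1 - l₁ 1 * l₂ 0| = 1 := by rcases hdet with h | h <;> simp [h]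
  have hs₁ : 0 < l₁ 0 + l₁ 1 := by
    refine lt_of_le_of_ne (by positivity) fun h => ?_
    simp [show l₁ 0 = 0 by linarith, show l₁ 1 = 0 by linarith] at habs
  have hs₂ : 0 < l₂ 0 + l₂ 1 := by
    refine lt_of_le_of_ne (by positivity) fun h => ?_
    simp [show l₂ 0 = 0 by linarith, show l₂ 1 = 0 by linarith] at habs
  set u₁ := (l₁ 0 + l₁ 1)⁻¹ • l₁
  set u₂ := (l₂ 0 + l₂ 1)⁻¹ • l₂
  have hu₁ : 0 ≤ u₁ := fun i => by fin_cases i <;> simp only [u₁, Pi.smul_apply, smul_eq_mul, Pi.zero_apply] <;> positivity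
  have hu₂ : 0 ≤ u₂ := fun i => by fin_cases i <;> simp only [u₂, Pi.smul_apply, smul_eq_mul, Pi.zero_apply] <;> positivity
  have hsum₁ : u₁ 0 + u₁ 1 = 1 := by simp only [u₁, Pi.smul_apply, smul_eq_mul, ← mul_add]; field_simp
  have hsum₂ : u₂ 0 + u₂ 1 = 1 := by simp only [u₂, Pi.smul_apply, smul_eq_mul, ← mul_add]; field_simp
  have hdet_u : u₁ 0 * u₂ 1 - u₁ 1 * u₂ 0 =
      ((l₁ 0 + l₁ 1) * (l₂ 0 + l₂ 1))⁻¹ * (l₁ 0 * l₂ 1 - l₁ 1 * l₂ 0) := by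
    simp only [u₁, u₂, Pi.smul_apply, smul_eq_mul, mul_inv]
    ring
  calc volume (triangle α ∩ cone l₁ l₂)
      = volume (triangle α ∩ cone u₁ u₂) := by rw [cone_smul (inv_pos.2 hs₁) (inv_pos.2 hs₂)]
    _ = _ := by
      rw [volume_triangle_inter_cone hu₁ hu₂ hsum₁ hsum₂ hα, hdet_u, abs_mul, habs,
        abs_of_pos (by positivity)]
      field_simp
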